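/- Let q, m, n be positive integers with gcd(mn, q) = 1. Then ∑⁺_{χ mod q} χ(m)·conj(χ)(n) = (1/2)·( ∑_{d ∣ gcd(q, m−n)} φ(d) μ(q/d) + ∑_{d ∣ gcd(q, m+n)} φ(d) μ(q/d) ), where gcd(q, 0) is understood to be q. -/

import Mathlib

/-!
For a primitive character `χ`, `(χ(m) + χ(-m)) / 2` is `χ(m)` if `χ` is even and `0` if it is odd,
so the left-hand side is the sum of `F(χ) = (χ(m) + χ(-m)) conj χ(n) / 2` over all primitive
`χ` mod `q`. On residues coprime to `q`, `F` does not change when a character is lifted to a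
higher level, and every character mod `e` is lifted from a unique primitive character mod its
conductor. Hence the sum of `F` over all characters mod `e` is the sum over `d ∣ e` of its sums
over primitive characters mod `d`, and Möbius inversion expresses the primitive sum mod `q`
through the full sums mod `d ∣ q`, which orthogonality evaluates to
`φ(d) / 2 * ([m ≡ n mod d] + [m ≡ -n mod d])`.
-/

open ComplexConjugate

namespace DirichletCharacter

variable {R M : Type*} [CommRing R] [IsDomain R] [AddCommGroup M]

open Classical in
theorem sum_eq_sum_divisors_sum_isPrimitive {e : ℕ} [NeZero e]
    (F : ∀ d, DirichletCharacter R d → M)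
    (hF : ∀ d (hd : d ∣ e) (χ : DirichletCharacter R d), F e (changeLevel hd χ) = F d χ) :
    ∑ χ : DirichletCharacter R e, F e χ =
      ∑ d ∈ e.divisors, ∑ χ : DirichletCharacter R d with χ.IsPrimitive, F d χ := by
  rw [← Finset.sum_fiberwise_of_maps_to (g := conductor) fun χ _ ↦
    Nat.mem_divisors.mpr ⟨χ.conductor_dvd_level, NeZero.ne e⟩]
  refine Finset.sum_congr rfl fun d hd ↦ ?_
  have hde := Nat.dvd_of_mem_divisors hd
  symm
  refine Finset.sum_bij (fun ψ _ ↦ changeLevel hde ψ) ?_ ?_ ?_ ?_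
  · intro ψ hψ
    simpa [conductor_changeLevel, isPrimitive_def] using hψ
  · exact fun _ _ _ _ h ↦ changeLevel_injective hde h
  · intro χ hχ
    have hd : χ.FactorsThrough d := (Finset.mem_filter.mp hχ).2 ▸ χ.factorsThrough_conductor
    refine ⟨hd.χ₀, ?_, hd.eq_changeLevel.symm⟩
    rw [Finset.mem_filter, isPrimitive_def, ← conductor_changeLevel _ hd.dvd, ← hd.eq_changeLevel]
    exact ⟨Finset.mem_univ _, (Finset.mem_filter.mp hχ).2⟩
  · exact fun ψ _ ↦ (hF d hde ψ).symm

open Classical in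
theorem sum_isPrimitive_eq_sum_moebius_smul {q : ℕ} [NeZero q]
    (F : ∀ d, DirichletCharacter R d → M)
    (hF : ∀ d e (hde : d ∣ e), e ∣ q → ∀ χ : DirichletCharacter R d,
      F e (changeLevel hde χ) = F d χ) :
    ∑ χ : DirichletCharacter R q with χ.IsPrimitive, F q χ =
      ∑ d ∈ q.divisors,
        ArithmeticFunction.moebius (q / d) • ∑ χ : DirichletCharacter R d, F d χ := by
  have inversion := (ArithmeticFunction.sum_eq_iff_sum_smul_moebius_eq_on
      (f := fun d ↦ ∑ χ : DirichletCharacter R d with χ.IsPrimitive, F d χ)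
      (g := fun e ↦ ∑ χ : DirichletCharacter R e, F e χ) {e | e ∣ q}
      (fun _ _ h₁ h₂ ↦ h₁.trans h₂)).mp (fun e he heq ↦ ?_) q (NeZero.pos q) dvd_rfl
  · rw [← inversion, Nat.sum_divisorsAntidiagonal' (f := fun a b ↦
      ArithmeticFunction.moebius a • ∑ χ : DirichletCharacter R b, F b χ)]
  · have : NeZero e := ⟨he.ne'⟩
    exact (sum_eq_sum_divisors_sum_isPrimitive F fun d hd ↦ hF d e hd heq).symm

noncomputable def evenPairing (a b : ℤ) {d : ℕ} (χ : DirichletCharacter ℂ d) : ℂ :=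
  (χ a + χ (-a)) * conj (χ b) / 2

theorem evenPairing_changeLevel {a b : ℤ} {d e : ℕ} (hd : d ∣ e) (ha : IsCoprime a e)
    (hb : IsCoprime b e) (χ : DirichletCharacter ℂ d) :
    evenPairing a b (changeLevel hd χ) = evenPairing a b χ := by
  have hna : IsCoprime (-a) e := ha.neg_left
  rw [evenPairing, evenPairing, ← Int.cast_neg, ← Int.cast_neg, changeLevel_eq_cast_of_dvd' χ hd ha,
    changeLevel_eq_cast_of_dvd' χ hd hb, changeLevel_eq_cast_of_dvd' χ hd hna]

theorem Even.evenPairing {d : ℕ} {χ : DirichletCharacter ℂ d} (hχ : χ.Even) (a b : ℤ) :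
    evenPairing a b χ = χ a * conj (χ b) := by
  rw [DirichletCharacter.evenPairing, hχ.eval_neg]
  ring

theorem Odd.evenPairing {d : ℕ} {χ : DirichletCharacter ℂ d} (hχ : χ.Odd) (a b : ℤ) :
    evenPairing a b χ = 0 := by
  rw [DirichletCharacter.evenPairing, hχ.eval_neg]
  ring

theorem sum_evenPairing {e : ℕ} [NeZero e] (a : ℤ) {b : ℤ} (hb : IsCoprime b e) :
    ∑ χ : DirichletCharacter ℂ e, evenPairing a b χ =
      (e.totient / 2 : ℂ) * ((if (a : ZMod e) = b then 1 else 0) +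
        (if (a : ZMod e) = -b then 1 else 0)) := by
  have hb' : IsUnit (b : ZMod e) := (ZMod.unitOfIsCoprime b hb).isUnit
  have hχ (χ : DirichletCharacter ℂ e) : evenPairing a b χ =
      (χ (b : ZMod e)⁻¹ * χ a + χ (b : ZMod e)⁻¹ * χ (-a)) / 2 := by
    have hχb : χ (b : ZMod e)⁻¹ * χ b = 1 := by
      rw [← map_mul, ZMod.inv_mul_of_unit _ hb', map_one]
    rw [evenPairing, ← RCLike.star_def, MulChar.star_apply', MulChar.inv_apply_eq_inv',
      ← eq_inv_of_mul_eq_one_left hχb]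
    ring
  simp only [hχ, ← Finset.sum_div, Finset.sum_add_distrib, sum_char_inv_mul_char_eq ℂ hb',
    eq_comm (a := (b : ZMod e)), neg_eq_iff_eq_neg]
  split_ifs <;> ring

open Classical in
theorem finsum_isPrimitive_even_mul_conj_eq_sum {q : ℕ} (a b : ℤ) :
    ∑ᶠ (χ : DirichletCharacter ℂ q) (_ : χ.IsPrimitive ∧ χ.Even), χ a * conj (χ b) =
      ∑ χ : DirichletCharacter ℂ q with χ.IsPrimitive, evenPairing a b χ := by
  rw [finsum_cond_eq_sum_of_cond_iff _ (t := {χ | χ.IsPrimitive ∧ χ.Even}) (by simp),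
    Finset.sum_filter, Finset.sum_filter]
  refine Finset.sum_congr rfl fun χ _ ↦ ?_
  by_cases hχ : χ.IsPrimitive
  · rcases χ.even_or_odd with heven | hodd
    · simp [hχ, heven, heven.evenPairing]
    · simp [hχ, hodd.not_even, hodd.evenPairing]
  · simp [hχ]

end DirichletCharacter

open DirichletCharacter

theorem Nat.filter_divisors_intCast_eq_intCast {q : ℕ} (hq : q ≠ 0) (a b : ℤ) :
    {d ∈ q.divisors | (a : ZMod d) = b} = (Int.gcd q (a - b)).divisors := by
  ext d
  simp only [Finset.mem_filter, Nat.mem_divisors, Int.dvd_gcd_iff, Int.natCast_dvd_natCast,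
    ZMod.intCast_eq_intCast_iff_dvd_sub, ne_eq, Int.gcd_eq_zero_iff,
    Int.natCast_eq_zero, hq, false_and, not_false_eq_true, and_true]
  rw [dvd_sub_comm]

theorem orthogonality_even_primitive (q m n : ℕ) [NeZero q]
    (h : Nat.Coprime (m * n) q) :
    ∑ᶠ (χ : DirichletCharacter ℂ q) (_ : χ.IsPrimitive ∧ χ.Even),
        χ (m : ZMod q) * (starRingEnd ℂ) (χ (n : ZMod q)) =
      (1 / 2 : ℂ) *
        ((∑ d ∈ (Int.gcd (q : ℤ) ((m : ℤ) - (n : ℤ))).divisors,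
            (Nat.totient d : ℂ) * (ArithmeticFunction.moebius (q / d) : ℂ)) +
          (∑ d ∈ (Nat.gcd q (m + n)).divisors,
            (Nat.totient d : ℂ) * (ArithmeticFunction.moebius (q / d) : ℂ))) := by
  have coprime_of_dvd {k : ℕ} (hk : k.Coprime q) {e : ℕ} (he : e ∣ q) : IsCoprime (k : ℤ) e :=
    (Nat.isCoprime_iff_coprime.mpr hk).of_isCoprime_of_dvd_right (Int.natCast_dvd_natCast.mpr he)
  have hm {e : ℕ} (he : e ∣ q) := coprime_of_dvd h.coprime_mul_right he
  have hn {e : ℕ} (he : e ∣ q) := coprime_of_dvd h.coprime_mul_left he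
  rw [← Int.cast_natCast (R := ZMod q) m, ← Int.cast_natCast (R := ZMod q) n,
    finsum_isPrimitive_even_mul_conj_eq_sum, sum_isPrimitive_eq_sum_moebius_smul _
      fun d e hde he χ ↦ evenPairing_changeLevel hde (hm he) (hn he) χ,
    ← Int.gcd_natCast_natCast, Nat.cast_add, ← sub_neg_eq_add (m : ℤ),
    ← Nat.filter_divisors_intCast_eq_intCast (NeZero.ne q),
    ← Nat.filter_divisors_intCast_eq_intCast (NeZero.ne q), Finset.sum_filter, Finset.sum_filter,
    ← Finset.sum_add_distrib, Finset.mul_sum]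
  refine Finset.sum_congr rfl fun d hd ↦ ?_
  have : NeZero d := ⟨(Nat.pos_of_mem_divisors hd).ne'⟩
  rw [sum_evenPairing _ (hn (Nat.dvd_of_mem_divisors hd)), zsmul_eq_mul, Int.cast_neg]
  split_ifs <;> ring
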